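/- In an i.i.d. environment, the half-space vertical law-of-large-numbers constant coincides with the full-space one: for G ∈ {F, L}, g^bk_f(e) = g^bk(e), where e = (0,1). -/

import Mathlib

open MeasureTheory ProbabilityTheory Filter Asymptotics

/-!
Half-space paths are full-space paths, so `g^bk ≤ g^bk_f`. Conversely, a full-space path of
duration `2k` started at height `k` cannot reach the wall, so by translation invariance of the
i.i.d. environment `E G^bk_f(0,0;0,2k) = E G^bk(k,a;k,a+2k)` for every `a`. Concatenating the
diagonal from `(0,0)` to `(k,k)`, `M` such vertical blocks and the antidiagonal back to the axis,
superadditivity gives `E G^bk(0,0;0,2k(M+1)) ≥ M (E G^bk_f(0,0;0,2k) - μ) - μ` with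
`μ = E X_bk ≥ 0`. Letting `M → ∞` gives `(E G^bk_f(0,0;0,2k) - μ) / 2k ≤ g^bk`, and `k → ∞`
gives `g^bk_f ≤ g^bk`.
-/

namespace HalfSpacePolymer

/-- A directed path in the half-space `H = {(x,t) ∈ ℤ² : x ≥ 0}` from `(x₁,t₁)` to `(x₂,t₂)`,
with increments `(±1, 1)`, identified with a function `ℤ → ℤ≥0` of the height coordinate
(frozen outside `⟦t₁, t₂⟧`). -/
structure HSPath (x₁ t₁ x₂ t₂ : ℤ) where
  f : ℤ → ℤ
  nonneg : ∀ t : ℤ, 0 ≤ f t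
  eq_left : ∀ t : ℤ, t ≤ t₁ → f t = x₁
  eq_right : ∀ t : ℤ, t₂ ≤ t → f t = x₂
  step : ∀ t : ℤ, t₁ ≤ t → t < t₂ → f (t + 1) = f t + 1 ∨ f (t + 1) = f t - 1

instance (x₁ t₁ x₂ t₂ : ℤ) : MeasurableSpace (HSPath x₁ t₁ x₂ t₂) := ⊤

/-- A full-space directed path in `ℤ²` (increments `(±1,1)`, not confined to the half-space). -/
structure FPath (x₁ t₁ x₂ t₂ : ℤ) where
  f : ℤ → ℤ
  eq_left : ∀ t : ℤ, t ≤ t₁ → f t = x₁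
  eq_right : ∀ t : ℤ, t₂ ≤ t → f t = x₂
  step : ∀ t : ℤ, t₁ ≤ t → t < t₂ → f (t + 1) = f t + 1 ∨ f (t + 1) = f t - 1

/-- The Hamiltonian (energy) of a half-space path in the environment `wt`. -/
noncomputable def energy (wt : ℤ × ℤ → ℝ) {x₁ t₁ x₂ t₂ : ℤ} (π : HSPath x₁ t₁ x₂ t₂) : ℝ :=
  ∑ s ∈ Finset.Icc t₁ t₂, wt (π.f s, s)

/-- The Hamiltonian (energy) of a full-space path in the environment `wt`. -/
noncomputable def energyF (wt : ℤ × ℤ → ℝ) {x₁ t₁ x₂ t₂ : ℤ} (π : FPath x₁ t₁ x₂ t₂) : ℝ :=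
  ∑ s ∈ Finset.Icc t₁ t₂, wt (π.f s, s)

/-- Partition function of the half-space polymer. -/
noncomputable def Zfun (wt : ℤ × ℤ → ℝ) (x₁ t₁ x₂ t₂ : ℤ) : ℝ :=
  ∑' π : HSPath x₁ t₁ x₂ t₂, Real.exp (energy wt π)

/-- Free energy of the half-space polymer. -/
noncomputable def freeEnergy (wt : ℤ × ℤ → ℝ) (x₁ t₁ x₂ t₂ : ℤ) : ℝ :=
  Real.log (Zfun wt x₁ t₁ x₂ t₂)

/-- Last passage time of the half-space model. -/
noncomputable def lpp (wt : ℤ × ℤ → ℝ) (x₁ t₁ x₂ t₂ : ℤ) : ℝ :=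
  ⨆ π : HSPath x₁ t₁ x₂ t₂, energy wt π

/-- Free energy of the full-space polymer. -/
noncomputable def freeEnergyF (wt : ℤ × ℤ → ℝ) (x₁ t₁ x₂ t₂ : ℤ) : ℝ :=
  Real.log (∑' π : FPath x₁ t₁ x₂ t₂, Real.exp (energyF wt π))

/-- Last passage time of the full-space model. -/
noncomputable def lppF (wt : ℤ × ℤ → ℝ) (x₁ t₁ x₂ t₂ : ℤ) : ℝ :=
  ⨆ π : FPath x₁ t₁ x₂ t₂, energyF wt π

/-- Quenched polymer (Gibbs) probability of a set `A` of paths. -/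
noncomputable def polyQ (wt : ℤ × ℤ → ℝ) (x₁ t₁ x₂ t₂ : ℤ)
    (A : Set (HSPath x₁ t₁ x₂ t₂)) : ℝ :=
  (∑' π : A, Real.exp (energy wt π.1)) / Zfun wt x₁ t₁ x₂ t₂

/-- The quenched polymer measure, as a measure on the set of paths. -/
noncomputable def polyMeasure (wt : ℤ × ℤ → ℝ) (x₁ t₁ x₂ t₂ : ℤ) :
    Measure (HSPath x₁ t₁ x₂ t₂) :=
  (ENNReal.ofReal (Zfun wt x₁ t₁ x₂ t₂))⁻¹ •
    Measure.sum fun π : HSPath x₁ t₁ x₂ t₂ =>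
      ENNReal.ofReal (Real.exp (energy wt π)) • Measure.dirac π

/-- A geodesic: a path of maximal energy among paths with the same endpoints. -/
def IsGeodesic (wt : ℤ × ℤ → ℝ) {x₁ t₁ x₂ t₂ : ℤ} (π : HSPath x₁ t₁ x₂ t₂) : Prop :=
  ∀ π' : HSPath x₁ t₁ x₂ t₂, energy wt π' ≤ energy wt π

/-- The left-most geodesic. -/
def IsLeftmostGeodesic (wt : ℤ × ℤ → ℝ) {x₁ t₁ x₂ t₂ : ℤ} (π : HSPath x₁ t₁ x₂ t₂) : Prop :=
  IsGeodesic wt π ∧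
    ∀ π' : HSPath x₁ t₁ x₂ t₂, IsGeodesic wt π' → ∀ t : ℤ, π.f t ≤ π'.f t

/-- The random environment data: a half-space environment `w` (vertical weights on `x = 0`
distributed as `μvt`, bulk weights as `μbk`), together with a coupled bulk (i.i.d.) environment
`wbk` agreeing with `w` off the vertical axis; all weights are jointly independent, almost
surely positive, subexponential, and of unbounded support. -/
structure EnvData (Ω : Type*) [MeasurableSpace Ω] (P : Measure Ω) where
  w : ℤ × ℤ → Ω → ℝ
  wbk : ℤ × ℤ → Ω → ℝ
  μbk : Measure ℝ
  μvt : Measure ℝ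
  prob_bk : IsProbabilityMeasure μbk
  prob_vt : IsProbabilityMeasure μvt
  meas_w : ∀ v : ℤ × ℤ, Measurable (w v)
  meas_wbk : ∀ v : ℤ × ℤ, Measurable (wbk v)
  agree : ∀ v : ℤ × ℤ, v.1 ≠ 0 → wbk v = w v
  law_w_bulk : ∀ v : ℤ × ℤ, v.1 ≠ 0 → P.map (w v) = μbk
  law_w_vert : ∀ t : ℤ, P.map (w (0, t)) = μvt
  law_wbk : ∀ v : ℤ × ℤ, P.map (wbk v) = μbk
  indep : iIndepFun (β := fun _ : (ℤ × ℤ) ⊕ ℤ => ℝ)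
    (Sum.elim w fun t : ℤ => wbk (0, t)) P
  pos_bk : μbk (Set.Iic 0) = 0
  pos_vt : μvt (Set.Iic 0) = 0
  subexp_bk : ∃ z : ℝ, 0 < z ∧ Integrable (fun x => Real.exp (z * x)) μbk
  subexp_vt : ∃ z : ℝ, 0 < z ∧ Integrable (fun x => Real.exp (z * x)) μvt
  unbdd_bk : ∀ z : ℝ, 0 < μbk (Set.Ioi z)
  unbdd_vt : ∀ z : ℝ, 0 < μvt (Set.Ioi z)

variable {Ω : Type*} [MeasurableSpace Ω] {P : Measure Ω}

/-- `G(x₁,t₁;x₂,t₂)` in the half-space environment: the last passage time if `zt = true`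
(zero temperature), the free energy if `zt = false` (positive temperature). -/
noncomputable def Ghs (E : EnvData Ω P) (zt : Bool) (x₁ t₁ x₂ t₂ : ℤ) (e : Ω) : ℝ :=
  if zt then lpp (fun v => E.w v e) x₁ t₁ x₂ t₂ else freeEnergy (fun v => E.w v e) x₁ t₁ x₂ t₂

/-- `G^bk(x₁,t₁;x₂,t₂)`: half-space paths in the bulk (i.i.d.) environment. -/
noncomputable def Gbk (E : EnvData Ω P) (zt : Bool) (x₁ t₁ x₂ t₂ : ℤ) (e : Ω) : ℝ :=
  if zt then lpp (fun v => E.wbk v e) x₁ t₁ x₂ t₂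
  else freeEnergy (fun v => E.wbk v e) x₁ t₁ x₂ t₂

/-- `G^bk_f(x₁,t₁;x₂,t₂)`: full-space paths in the bulk (i.i.d.) environment. -/
noncomputable def GbkF (E : EnvData Ω P) (zt : Bool) (x₁ t₁ x₂ t₂ : ℤ) (e : Ω) : ℝ :=
  if zt then lppF (fun v => E.wbk v e) x₁ t₁ x₂ t₂
  else freeEnergyF (fun v => E.wbk v e) x₁ t₁ x₂ t₂

/-- Mean of `G(x₁,t₁;x₂,t₂)` over the environment. -/
noncomputable def meanG (E : EnvData Ω P) (zt : Bool) (x₁ t₁ x₂ t₂ : ℤ) : ℝ :=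
  ∫ e, Ghs E zt x₁ t₁ x₂ t₂ e ∂P

/-- Mean of `G^bk(x₁,t₁;x₂,t₂)` over the environment. -/
noncomputable def meanGbk (E : EnvData Ω P) (zt : Bool) (x₁ t₁ x₂ t₂ : ℤ) : ℝ :=
  ∫ e, Gbk E zt x₁ t₁ x₂ t₂ e ∂P

/-- `g` and `g^bk` are the laws of large numbers of `G(0,0;0,n)` and `G^bk(0,0;0,n)`
along even `n` (these limits exist by superadditivity). -/
def HasLLN (E : EnvData Ω P) (zt : Bool) (g gbk : ℝ) : Prop :=
  Tendsto (fun n : ℕ => (∫ e, Ghs E zt 0 0 0 (2 * (n : ℤ)) e ∂P) / (2 * (n : ℝ)))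
      atTop (nhds g) ∧
    Tendsto (fun n : ℕ => (∫ e, Gbk E zt 0 0 0 (2 * (n : ℤ)) e ∂P) / (2 * (n : ℝ)))
      atTop (nhds gbk)

/-- LLN separation: `g > g^bk`. -/
def LLNSep (E : EnvData Ω P) (zt : Bool) : Prop :=
  ∃ g gbk : ℝ, HasLLN E zt g gbk ∧ gbk < g

/-- Number of blocks: `N = sup {i : iK + J ≤ n}` for `n = 2m + 4`. -/
noncomputable def Nblk (J K : ℕ → ℤ) (m : ℕ) : ℕ :=
  sSup {i : ℕ | (i : ℤ) * K m + J m ≤ 2 * (m : ℤ) + 4}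

/-- Block boundaries: `m₀ = 0`, `mᵢ = iK + J` for `1 ≤ i ≤ N`, `m_{N+1} = n = 2m + 4`. -/
noncomputable def mpt (J K : ℕ → ℤ) (m : ℕ) (i : ℕ) : ℤ :=
  if i = 0 then 0 else if i ≤ Nblk J K m then (i : ℤ) * K m + J m else 2 * (m : ℤ) + 4

/-- The block free energies `Gᵢ⁰ = G(0,mᵢ;0,m_{i+1}) − ω(0,m_{i+1})` for `i < N`, and
`G_N⁰ = G(0,m_N;0,n)`. -/
noncomputable def Gblk (E : EnvData Ω P) (zt : Bool) (J K : ℕ → ℤ) (m i : ℕ) (e : Ω) : ℝ :=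
  Ghs E zt 0 (mpt J K m i) 0 (mpt J K m (i + 1)) e -
    (if i < Nblk J K m then E.w (0, mpt J K m (i + 1)) e else 0)

/-- Constraints on the block scales `J, K` for `n = 2m + 4`: `J, K` even,
`J^{1/4} ∈ [(log n)^{5/4}, 2 (log n)^{5/4}]` and `K ∈ [n^{0.9}, 2 n^{0.9}]`. -/
def BlockScales (J K : ℕ → ℤ) : Prop :=
  ∀ m : ℕ,
    Even (J m) ∧ Even (K m) ∧
    (Real.log (2 * (m : ℝ) + 4)) ^ ((5 : ℝ) / 4) ≤ ((J m : ℝ)) ^ ((1 : ℝ) / 4) ∧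
    ((J m : ℝ)) ^ ((1 : ℝ) / 4) ≤ 2 * (Real.log (2 * (m : ℝ) + 4)) ^ ((5 : ℝ) / 4) ∧
    (2 * (m : ℝ) + 4) ^ ((0.9 : ℝ)) ≤ (K m : ℝ) ∧
    (K m : ℝ) ≤ 2 * (2 * (m : ℝ) + 4) ^ ((0.9 : ℝ))

/-- The normalized triangular array `X_{N,i}` built from the block free energies. -/
noncomputable def Xblk (E : EnvData Ω P) (zt : Bool) (J K : ℕ → ℤ) (σ : ℕ → ℝ)
    (m i : ℕ) (e : Ω) : ℝ :=
  (Ghs E zt 0 (mpt J K m i) 0 (mpt J K m (i + 1)) e -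
      ∫ e', Ghs E zt 0 (mpt J K m i) 0 (mpt J K m (i + 1)) e' ∂P) /
    (σ m * Real.sqrt ((Nblk J K m : ℝ) * (K m : ℝ)))


section Limits

lemma tendsto_div_of_tendsto_div_half {A : ℤ → ℝ} {g : ℝ}
    (h : Tendsto (fun n : ℕ => A ((n : ℤ) / 2) / n) atTop (nhds g)) :
    Tendsto (fun m : ℕ => A m / m) atTop (nhds (2 * g)) := by
  refine ((h.comp (tendsto_id.const_mul_atTop' two_pos)).const_mul 2).congr fun m => ?_
  simp only [Function.comp_apply, id, Nat.cast_mul, Nat.cast_ofNat,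
    Int.mul_ediv_cancel_left _ two_ne_zero]
  rw [← mul_div_assoc, mul_div_mul_left _ _ two_ne_zero]

lemma div_le_of_block_bound {a : ℕ → ℝ} {c C g : ℝ} {k : ℕ} (hk : 0 < k)
    (ha : Tendsto (fun n => a n / n) atTop (nhds g))
    (hblock : ∀ M : ℕ, M * c - C ≤ a (k * (M + 1))) : c / k ≤ g := by
  have hkM : Tendsto (fun M : ℕ => k * (M + 1)) atTop atTop :=
    (tendsto_add_atTop_nat 1).const_mul_atTop' hk
  have hlower : Tendsto (fun M : ℕ => c / k - (c + C) / ((k * (M + 1) : ℕ) : ℝ)) atTop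
      (nhds (c / k)) := by
    simpa using tendsto_const_nhds.sub
      ((tendsto_const_div_atTop_nhds_zero_nat (c + C)).comp hkM)
  refine le_of_tendsto_of_tendsto' hlower (ha.comp hkM) fun M => ?_
  rw [Function.comp_apply, ← sub_nonneg]
  have key : a (k * (M + 1)) / ((k * (M + 1) : ℕ) : ℝ)
        - (c / k - (c + C) / ((k * (M + 1) : ℕ) : ℝ))
      = (a (k * (M + 1)) - (M * c - C)) / ((k * (M + 1) : ℕ) : ℝ) := by
    push_cast
    field_simp
    ring
  rw [key]
  exact div_nonneg (sub_nonneg.mpr (hblock M)) (Nat.cast_nonneg _)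

lemma eq_of_le_of_block_bound {a b : ℕ → ℝ} {μ g₁ g₂ : ℝ}
    (ha : Tendsto (fun n => a n / n) atTop (nhds g₁))
    (hb : Tendsto (fun n => b n / n) atTop (nhds g₂)) (hab : ∀ n, a n ≤ b n)
    (hblock : ∀ k M : ℕ, M * (b k - μ) - μ ≤ a (k * (M + 1))) : g₁ = g₂ := by
  refine le_antisymm (le_of_tendsto_of_tendsto' ha hb fun n =>
    div_le_div_of_nonneg_right (hab n) n.cast_nonneg) ?_
  refine le_of_tendsto (by simpa using hb.sub (tendsto_const_div_atTop_nhds_zero_nat μ))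
    (eventually_atTop.mpr ⟨1, fun k hk => ?_⟩)
  rw [← sub_div]
  exact div_le_of_block_bound hk ha (hblock k)

end Limits

/-- `lpp` and `freeEnergy` are `maxOrLogSumExp true` and `maxOrLogSumExp false` of the path
energies. -/
noncomputable def maxOrLogSumExp (zt : Bool) {ι : Type*} (e : ι → ℝ) : ℝ :=
  if zt then ⨆ i, e i else Real.log (∑' i, Real.exp (e i))

section MaxOrLogSumExp

variable (zt : Bool) {ι κ : Type*}

lemma le_maxOrLogSumExp [Finite ι] (e : ι → ℝ) (i : ι) : e i ≤ maxOrLogSumExp zt e := by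
  cases zt
  · have := Fintype.ofFinite ι
    rw [maxOrLogSumExp, if_neg Bool.false_ne_true, Real.le_log_iff_exp_le, tsum_fintype]
    · exact Finset.single_le_sum (fun j _ => (Real.exp_pos (e j)).le) (Finset.mem_univ i)
    · rw [tsum_fintype]; exact Finset.sum_pos (fun j _ => Real.exp_pos _) ⟨i, Finset.mem_univ i⟩
  · exact le_ciSup (Set.finite_range e).bddAbove i

lemma maxOrLogSumExp_le_add_log_card [Fintype ι] [Nonempty ι] {e : ι → ℝ} {c : ℝ}
    (h : ∀ i, e i ≤ c) : maxOrLogSumExp zt e ≤ c + Real.log (Fintype.card ι) := by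
  have hlog : 0 ≤ Real.log (Fintype.card ι) :=
    Real.log_nonneg (by exact_mod_cast Fintype.card_pos)
  cases zt
  · rw [maxOrLogSumExp, if_neg Bool.false_ne_true, tsum_fintype,
      ← Real.log_exp c, ← Real.log_mul (Real.exp_ne_zero c) (by positivity)]
    refine Real.log_le_log (Finset.sum_pos (fun j _ => Real.exp_pos _) Finset.univ_nonempty) ?_
    calc ∑ i, Real.exp (e i) ≤ ∑ _i : ι, Real.exp c :=
          Finset.sum_le_sum fun i _ => Real.exp_le_exp.mpr (h i)
      _ = Real.exp c * Fintype.card ι := by simp [mul_comm]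
  · exact (ciSup_le h).trans (le_add_of_nonneg_right hlog)

lemma maxOrLogSumExp_comp_equiv (e : ι → ℝ) (σ : κ ≃ ι) :
    maxOrLogSumExp zt (e ∘ σ) = maxOrLogSumExp zt e := by
  cases zt
  · simp only [maxOrLogSumExp, if_neg Bool.false_ne_true, Function.comp_apply,
      σ.tsum_eq (fun i => Real.exp (e i))]
  · simp only [maxOrLogSumExp, if_pos, Function.comp_apply, σ.iSup_comp (g := e)]

lemma maxOrLogSumExp_comp_le_of_injective [Finite ι] [Nonempty κ] (e : ι → ℝ) {f : κ → ι}
    (hf : Function.Injective f) : maxOrLogSumExp zt (e ∘ f) ≤ maxOrLogSumExp zt e := by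
  have := Finite.of_injective f hf
  cases zt
  · have := Fintype.ofFinite κ
    refine Real.log_le_log ?_ (tsum_comp_le_tsum_of_inj (f := fun i => Real.exp (e i))
      (Summable.of_finite) (fun i => (Real.exp_pos _).le) hf)
    rw [tsum_fintype]; exact Finset.sum_pos (fun j _ => Real.exp_pos _) Finset.univ_nonempty
  · exact ciSup_le fun j => le_maxOrLogSumExp true e (f j)

lemma maxOrLogSumExp_sub_const [Fintype ι] [Nonempty ι] (e : ι → ℝ) (c : ℝ) :
    maxOrLogSumExp zt (fun i => e i - c) = maxOrLogSumExp zt e - c := by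
  cases zt
  · simp only [maxOrLogSumExp, if_neg Bool.false_ne_true, Real.exp_sub, tsum_div_const]
    rw [tsum_fintype, Real.log_div (Finset.sum_pos (fun j _ => Real.exp_pos _)
      Finset.univ_nonempty).ne' (Real.exp_ne_zero c), Real.log_exp]
  · exact (ciSup_sub (Set.finite_range e).bddAbove c).symm

lemma maxOrLogSumExp_add_prod [Fintype ι] [Fintype κ] [Nonempty ι] [Nonempty κ]
    (e₁ : ι → ℝ) (e₂ : κ → ℝ) :
    maxOrLogSumExp zt (fun p : ι × κ => e₁ p.1 + e₂ p.2)
      = maxOrLogSumExp zt e₁ + maxOrLogSumExp zt e₂ := by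
  cases zt
  · simp only [maxOrLogSumExp, if_neg Bool.false_ne_true, Real.exp_add, tsum_fintype]
    rw [← Real.log_mul (Finset.sum_pos (fun j _ => Real.exp_pos _) Finset.univ_nonempty).ne'
      (Finset.sum_pos (fun j _ => Real.exp_pos _) Finset.univ_nonempty).ne',
      Finset.sum_mul_sum, ← Finset.sum_product', Finset.univ_product_univ]
  · obtain ⟨i, hi⟩ := exists_eq_ciSup_of_finite (f := e₁)
    obtain ⟨j, hj⟩ := exists_eq_ciSup_of_finite (f := e₂)
    refine le_antisymm (ciSup_le fun p =>
      add_le_add (le_maxOrLogSumExp true e₁ p.1) (le_maxOrLogSumExp true e₂ p.2)) ?_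
    simp only [maxOrLogSumExp, if_pos, ← hi, ← hj]
    exact le_maxOrLogSumExp true (fun p : ι × κ => e₁ p.1 + e₂ p.2) (i, j)

lemma abs_maxOrLogSumExp_le [Fintype ι] (e : ι → ℝ) :
    |maxOrLogSumExp zt e| ≤ Real.log (Fintype.card ι) + ∑ i, |e i| := by
  rcases isEmpty_or_nonempty ι with hι | hι
  · cases zt <;> simp [maxOrLogSumExp]
  have habs (i : ι) : |e i| ≤ ∑ j, |e j| :=
    Finset.single_le_sum (fun j _ => abs_nonneg (e j)) (Finset.mem_univ i)
  have hlog : 0 ≤ Real.log (Fintype.card ι) :=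
    Real.log_nonneg (by exact_mod_cast Fintype.card_pos)
  let i := Classical.arbitrary ι
  rw [abs_le]
  constructor
  · linarith [le_maxOrLogSumExp zt e i, neg_abs_le (e i), habs i]
  · linarith [maxOrLogSumExp_le_add_log_card zt (e := e) fun i => (le_abs_self _).trans (habs i)]

lemma measurable_maxOrLogSumExp [Fintype ι] :
    Measurable (maxOrLogSumExp zt : (ι → ℝ) → ℝ) := by
  cases zt
  · show Measurable fun e : ι → ℝ => Real.log (∑' i, Real.exp (e i))
    simp only [tsum_fintype]
    fun_prop
  · exact Measurable.iSup fun i => measurable_pi_apply i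

lemma integrable_maxOrLogSumExp {Ω : Type*} [MeasurableSpace Ω] {P : Measure Ω}
    [IsFiniteMeasure P] [Fintype ι] {e : Ω → ι → ℝ} (he : ∀ i, Integrable (fun ω => e ω i) P) :
    Integrable (fun ω => maxOrLogSumExp zt (e ω)) P :=
  Integrable.mono' ((integrable_const _).add (integrable_finsetSum _ fun i _ => (he i).abs))
    ((measurable_maxOrLogSumExp zt).comp_aemeasurable
      (aemeasurable_pi_lambda _ fun i => (he i).aemeasurable)).aestronglyMeasurable
    (Eventually.of_forall fun ω => abs_maxOrLogSumExp_le zt (e ω))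

end MaxOrLogSumExp

section Paths

variable {x₁ t₁ x₂ t₂ : ℤ}

lemma FPath.abs_f_succ_sub_le (π : FPath x₁ t₁ x₂ t₂) (t : ℤ) : |π.f (t + 1) - π.f t| ≤ 1 := by
  rcases lt_or_ge t t₁ with h | h
  · rw [π.eq_left t h.le, π.eq_left (t + 1) h, sub_self, abs_zero]; exact zero_le_one
  rcases lt_or_ge t t₂ with h' | h'
  · rcases π.step t h h' with hs | hs <;> rw [hs] <;> norm_num
  · rw [π.eq_right t h', π.eq_right (t + 1) (by omega), sub_self, abs_zero]; exact zero_le_one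

lemma FPath.abs_f_sub_le (π : FPath x₁ t₁ x₂ t₂) {s s' : ℤ} (h : s ≤ s') :
    |π.f s' - π.f s| ≤ s' - s := by
  induction s', h using Int.leInduction with
  | base => simp
  | succ t _ ih =>
    linarith [abs_sub_le (π.f (t + 1)) (π.f t) (π.f s), π.abs_f_succ_sub_le t]

lemma FPath.ext_of_eqOn {π π' : FPath x₁ t₁ x₂ t₂}
    (h : ∀ s ∈ Finset.Icc t₁ t₂, π.f s = π'.f s) : π = π' := by
  obtain ⟨f, _, _, _⟩ := π
  obtain ⟨f', _, _, _⟩ := π'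
  congr
  funext t
  rcases le_or_gt t t₁ with h₁ | h₁
  · simp_all
  rcases le_or_gt t₂ t with h₂ | h₂
  · simp_all
  exact h t (Finset.mem_Icc.mpr ⟨h₁.le, h₂.le⟩)

instance : Finite (FPath x₁ t₁ x₂ t₂) := by
  let g : FPath x₁ t₁ x₂ t₂ →
      (Finset.Icc t₁ t₂ → Finset.Icc (x₁ - (t₂ - t₁)) (x₁ + (t₂ - t₁))) :=
    fun π s => ⟨π.f s, by
      have hs := Finset.mem_Icc.mp s.2
      have h := abs_le.mp ((π.abs_f_sub_le hs.1).trans_eq' (by rw [π.eq_left t₁ le_rfl]))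
      exact Finset.mem_Icc.mpr ⟨by omega, by omega⟩⟩
  refine Finite.of_injective g fun π π' h => FPath.ext_of_eqOn fun s hs => ?_
  simpa [g] using congrFun h ⟨s, hs⟩

def HSPath.toF (π : HSPath x₁ t₁ x₂ t₂) : FPath x₁ t₁ x₂ t₂ :=
  ⟨π.f, π.eq_left, π.eq_right, π.step⟩

lemma HSPath.toF_injective :
    Function.Injective (HSPath.toF : HSPath x₁ t₁ x₂ t₂ → FPath x₁ t₁ x₂ t₂) := by
  rintro ⟨f, _, _, _, _⟩ ⟨f', _, _, _, _⟩ h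
  cases h
  rfl

instance : Finite (HSPath x₁ t₁ x₂ t₂) := Finite.of_injective _ HSPath.toF_injective

noncomputable instance : Fintype (FPath x₁ t₁ x₂ t₂) := Fintype.ofFinite _

noncomputable instance : Fintype (HSPath x₁ t₁ x₂ t₂) := Fintype.ofFinite _

/-- Away from the wall the half-space constraint is void: a path of duration `t₂ - t₁` between
heights `x₁, x₂ ≥ 0` stays at height `≥ (x₁ + x₂ - (t₂ - t₁)) / 2`. -/
def HSPath.equivFPath (hx₁ : 0 ≤ x₁) (hx₂ : 0 ≤ x₂) (h : t₂ - t₁ ≤ x₁ + x₂) :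
    HSPath x₁ t₁ x₂ t₂ ≃ FPath x₁ t₁ x₂ t₂ where
  toFun := HSPath.toF
  invFun π := ⟨π.f, fun t => by
      rcases le_or_gt t t₁ with h₁ | h₁
      · rw [π.eq_left t h₁]; exact hx₁
      rcases le_or_gt t₂ t with h₂ | h₂
      · rw [π.eq_right t h₂]; exact hx₂
      have hl := abs_le.mp (π.abs_f_sub_le h₁.le)
      have hr := abs_le.mp (π.abs_f_sub_le h₂.le)
      rw [π.eq_left t₁ le_rfl] at hl
      rw [π.eq_right t₂ le_rfl] at hr
      omega, π.eq_left, π.eq_right, π.step⟩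
  left_inv _ := rfl
  right_inv _ := rfl

lemma HSPath.nonempty_of (hx₁ : 0 ≤ x₁) (hx₂ : 0 ≤ x₂) (hdist : |x₂ - x₁| ≤ t₂ - t₁)
    (hpar : Even (t₂ - t₁ + x₂ - x₁)) : Nonempty (HSPath x₁ t₁ x₂ t₂) := by
  obtain ⟨r, hr⟩ := hpar
  rw [abs_le] at hdist
  -- the upper envelope of the two light cones, lifted to the zig-zag `0, 1, 0, …` near the wall
  let c : ℤ → ℤ := fun t => max t₁ (min t t₂)
  exact ⟨{
    f := fun t => max (max (x₁ - (c t - t₁)) (x₂ - (t₂ - c t))) ((x₁ + c t - t₁) % 2)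
    nonneg := fun t => by omega
    eq_left := fun t ht => by simp only [c]; omega
    eq_right := fun t ht => by simp only [c]; omega
    step := fun t ht₁ ht₂ => by simp only [c]; omega }⟩

def HSPath.concat {x y z a b c : ℤ} (π₁ : HSPath x a y b) (π₂ : HSPath y b z c)
    (hab : a ≤ b) (hbc : b ≤ c) : HSPath x a z c where
  f t := if t ≤ b then π₁.f t else π₂.f t
  nonneg t := by split_ifs; exacts [π₁.nonneg t, π₂.nonneg t]
  eq_left t ht := by rw [if_pos (ht.trans hab)]; exact π₁.eq_left t ht
  eq_right t ht := by
    have := π₂.eq_right t ht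
    split_ifs with h
    · have := π₁.eq_right t (hbc.trans ht)
      have := π₂.eq_left t h
      omega
    · assumption
  step t ht₁ ht₂ := by
    rcases lt_trichotomy t b with h | rfl | h
    · have := π₁.step t ht₁ h
      simp only [if_pos h.le, if_pos (show t + 1 ≤ b by omega)]
      exact this
    · have := π₂.step t le_rfl ht₂
      have := π₁.eq_right t le_rfl
      have := π₂.eq_left t le_rfl
      simp only [le_refl, if_true, if_neg (show ¬t + 1 ≤ t by omega)]
      omega
    · simp only [if_neg (show ¬t ≤ b by omega), if_neg (show ¬t + 1 ≤ b by omega)]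
      exact π₂.step t h.le ht₂

lemma HSPath.concat_injective {x y z a b c : ℤ} (hab : a ≤ b) (hbc : b ≤ c) :
    Function.Injective fun p : HSPath x a y b × HSPath y b z c => p.1.concat p.2 hab hbc := by
  rintro ⟨π₁, π₂⟩ ⟨π₁', π₂'⟩ h
  have hf := congrArg HSPath.f h
  simp only [HSPath.concat] at hf
  refine Prod.ext (HSPath.toF_injective (FPath.ext_of_eqOn fun s hs => ?_))
    (HSPath.toF_injective (FPath.ext_of_eqOn fun s hs => ?_))
  · simpa [HSPath.toF, (Finset.mem_Icc.mp hs).2] using congrFun hf s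
  · by_cases hsb : s ≤ b
    · exact (π₂.eq_left s hsb).trans (π₂'.eq_left s hsb).symm
    · simpa [HSPath.toF, hsb] using congrFun hf s

lemma energy_concat (wt : ℤ × ℤ → ℝ) {x y z a b c : ℤ}
    (π₁ : HSPath x a y b) (π₂ : HSPath y b z c) (hab : a ≤ b) (hbc : b ≤ c) :
    energy wt (π₁.concat π₂ hab hbc) = energy wt π₁ + energy wt π₂ - wt (y, b) := by
  have hsplit : Finset.Icc a c = Finset.Icc a b ∪ Finset.Ioc b c := by
    ext s; simp only [Finset.mem_Icc, Finset.mem_union, Finset.mem_Ioc]; omega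
  have hdisj : Disjoint (Finset.Icc a b) (Finset.Ioc b c) :=
    Finset.disjoint_left.mpr fun s h₁ h₂ => by
      simp only [Finset.mem_Icc, Finset.mem_Ioc] at h₁ h₂; omega
  have hπ₂ : energy wt π₂ = wt (y, b) + ∑ s ∈ Finset.Ioc b c, wt (π₂.f s, s) := by
    rw [energy, ← Finset.add_sum_Ioc_eq_sum_Icc hbc, π₂.eq_left b le_rfl]
  have h₁ : ∑ s ∈ Finset.Icc a b, wt ((π₁.concat π₂ hab hbc).f s, s)
      = ∑ s ∈ Finset.Icc a b, wt (π₁.f s, s) :=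
    Finset.sum_congr rfl fun s hs => by simp [HSPath.concat, (Finset.mem_Icc.mp hs).2]
  have h₂ : ∑ s ∈ Finset.Ioc b c, wt ((π₁.concat π₂ hab hbc).f s, s)
      = ∑ s ∈ Finset.Ioc b c, wt (π₂.f s, s) :=
    Finset.sum_congr rfl fun s hs => by
      simp [HSPath.concat, not_le.mpr (Finset.mem_Ioc.mp hs).1]
  rw [hπ₂, energy, energy, hsplit, Finset.sum_union hdisj, h₁, h₂]
  ring

def FPath.translate (p q : ℤ) : FPath x₁ t₁ x₂ t₂ ≃ FPath (x₁ + p) (t₁ + q) (x₂ + p) (t₂ + q) where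
  toFun π := ⟨fun t => π.f (t - q) + p,
    fun t ht => by rw [π.eq_left _ (by omega)],
    fun t ht => by rw [π.eq_right _ (by omega)],
    fun t ht₁ ht₂ => by
      have := π.step (t - q) (by omega) (by omega)
      rw [show t + 1 - q = t - q + 1 by ring]; omega⟩
  invFun π := ⟨fun t => π.f (t + q) - p,
    fun t ht => by rw [π.eq_left _ (by omega)]; ring,
    fun t ht => by rw [π.eq_right _ (by omega)]; ring,
    fun t ht₁ ht₂ => by
      have := π.step (t + q) (by omega) (by omega)
      rw [show t + 1 + q = t + q + 1 by ring]; omega⟩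
  left_inv π := FPath.ext_of_eqOn fun s _ => by simp
  right_inv π := FPath.ext_of_eqOn fun s _ => by simp

lemma energyF_translate (wt : ℤ × ℤ → ℝ) (p q : ℤ) (π : FPath x₁ t₁ x₂ t₂) :
    energyF wt (FPath.translate p q π) = energyF (fun v => wt (v.1 + p, v.2 + q)) π := by
  rw [energyF, energyF, ← Finset.map_add_right_Icc t₁ t₂ q, Finset.sum_map]
  simp [FPath.translate]

lemma HSPath.nonempty_diag {k : ℤ} (hk : 0 ≤ k) (n : ℕ) :
    Nonempty (HSPath 0 0 k (k + 2 * k * n)) := by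
  have : 0 ≤ 2 * k * n := by positivity
  exact HSPath.nonempty_of le_rfl hk (by rw [sub_zero, sub_zero, abs_of_nonneg hk]; linarith)
    ⟨k + k * n, by ring⟩

end Paths

section Polymer

variable (zt : Bool) (wt : ℤ × ℤ → ℝ) {x₁ t₁ x₂ t₂ : ℤ}

/-- `Gbk E zt x₁ t₁ x₂ t₂ e` is `Ghalf zt (fun v => E.wbk v e) x₁ t₁ x₂ t₂` by definition. -/
noncomputable def Ghalf (zt : Bool) (wt : ℤ × ℤ → ℝ) (x₁ t₁ x₂ t₂ : ℤ) : ℝ :=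
  maxOrLogSumExp zt fun π : HSPath x₁ t₁ x₂ t₂ => energy wt π

noncomputable def Gfull (zt : Bool) (wt : ℤ × ℤ → ℝ) (x₁ t₁ x₂ t₂ : ℤ) : ℝ :=
  maxOrLogSumExp zt fun π : FPath x₁ t₁ x₂ t₂ => energyF wt π

lemma energy_le_Ghalf (π : HSPath x₁ t₁ x₂ t₂) : energy wt π ≤ Ghalf zt wt x₁ t₁ x₂ t₂ :=
  le_maxOrLogSumExp zt _ π

lemma Ghalf_concat {x y z a b c : ℤ} (hab : a ≤ b) (hbc : b ≤ c)
    [Nonempty (HSPath x a y b)] [Nonempty (HSPath y b z c)] :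
    Ghalf zt wt x a y b + Ghalf zt wt y b z c - wt (y, b) ≤ Ghalf zt wt x a z c := by
  calc Ghalf zt wt x a y b + Ghalf zt wt y b z c - wt (y, b)
      = maxOrLogSumExp zt fun p : HSPath x a y b × HSPath y b z c =>
          energy wt p.1 + (energy wt p.2 - wt (y, b)) := by
        rw [add_sub_assoc, Ghalf, Ghalf, ← maxOrLogSumExp_sub_const, ← maxOrLogSumExp_add_prod]
    _ = maxOrLogSumExp zt ((fun π => energy wt π) ∘
          fun p : HSPath x a y b × HSPath y b z c => p.1.concat p.2 hab hbc) := by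
        congr 1
        funext p
        rw [Function.comp_apply, energy_concat, add_sub_assoc]
    _ ≤ Ghalf zt wt x a z c :=
        maxOrLogSumExp_comp_le_of_injective zt _ (HSPath.concat_injective hab hbc)

lemma Ghalf_le_Gfull [Nonempty (HSPath x₁ t₁ x₂ t₂)] :
    Ghalf zt wt x₁ t₁ x₂ t₂ ≤ Gfull zt wt x₁ t₁ x₂ t₂ :=
  maxOrLogSumExp_comp_le_of_injective zt (fun π => energyF wt π) HSPath.toF_injective

lemma Ghalf_eq_Gfull_of_le_add (hx₁ : 0 ≤ x₁) (hx₂ : 0 ≤ x₂) (h : t₂ - t₁ ≤ x₁ + x₂) :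
    Ghalf zt wt x₁ t₁ x₂ t₂ = Gfull zt wt x₁ t₁ x₂ t₂ :=
  maxOrLogSumExp_comp_equiv zt (fun π => energyF wt π) (HSPath.equivFPath hx₁ hx₂ h)

lemma Gfull_translate (p q : ℤ) :
    Gfull zt wt (x₁ + p) (t₁ + q) (x₂ + p) (t₂ + q)
      = Gfull zt (fun v => wt (v.1 + p, v.2 + q)) x₁ t₁ x₂ t₂ := by
  rw [Gfull, Gfull, ← maxOrLogSumExp_comp_equiv zt _ (FPath.translate p q)]
  simp only [Function.comp_def, energyF_translate]

lemma measurable_Gfull : Measurable fun wt => Gfull zt wt x₁ t₁ x₂ t₂ :=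
  (measurable_maxOrLogSumExp zt).comp <| measurable_pi_lambda _ fun _ =>
    Finset.measurable_sum _ fun _ _ => measurable_pi_apply _

end Polymer

namespace EnvData

variable (E : EnvData Ω P)

lemma wbk_pos_ae (v : ℤ × ℤ) : ∀ᵐ e ∂P, 0 < E.wbk v e := by
  have h0 : P (E.wbk v ⁻¹' Set.Iic 0) = 0 := by
    rw [← Measure.map_apply (E.meas_wbk v) measurableSet_Iic, E.law_wbk]
    exact E.pos_bk
  rw [ae_iff]
  exact measure_mono_null (fun e (he : ¬0 < E.wbk v e) => (not_lt.mp he : E.wbk v e ≤ 0)) h0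

lemma integrable_wbk (v : ℤ × ℤ) : Integrable (E.wbk v) P := by
  obtain ⟨z, hz, hint⟩ := E.subexp_bk
  rw [← E.law_wbk v] at hint
  have hexp := (integrable_map_measure hint.aestronglyMeasurable
    (E.meas_wbk v).aemeasurable).mp hint
  -- `x ≤ exp (z x) / z` for `x > 0`
  refine Integrable.mono' (hexp.div_const z) (E.meas_wbk v).aestronglyMeasurable ?_
  filter_upwards [E.wbk_pos_ae v] with e he
  rw [Real.norm_eq_abs, abs_of_pos he, le_div_iff₀ hz, Function.comp_apply]
  nlinarith [Real.add_one_le_exp (z * E.wbk v e)]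

lemma integral_wbk (v : ℤ × ℤ) : ∫ e, E.wbk v e ∂P = ∫ x, x ∂E.μbk := by
  rw [← E.law_wbk v]
  exact (integral_map (E.meas_wbk v).aemeasurable (f := fun x : ℝ => x)
    aestronglyMeasurable_id).symm

lemma integral_μbk_nonneg : 0 ≤ ∫ x, x ∂E.μbk :=
  integral_nonneg_of_ae <| (ae_iff.mpr <| measure_mono_null (fun _ hx => le_of_lt
    (not_le.mp hx)) E.pos_bk)

lemma iIndepFun_wbk : iIndepFun E.wbk P := by
  -- off the axis `wbk` is `w`; on the axis it is the extra family `wbk (0, ·)`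
  let ρ : ℤ × ℤ → (ℤ × ℤ) ⊕ ℤ := fun v => if v.1 = 0 then Sum.inr v.2 else Sum.inl v
  have hρ : Function.Injective ρ := by
    intro v w h
    simp only [ρ] at h
    split_ifs at h <;> simp_all [Prod.ext_iff]
  convert E.indep.precomp hρ using 1
  funext ⟨x, t⟩
  simp only [ρ]
  split_ifs with h
  · subst h; rfl
  · exact E.agree (x, t) h

lemma integral_comp_wbk_of_injective [IsProbabilityMeasure P] {τ : ℤ × ℤ → ℤ × ℤ}
    (hτ : Function.Injective τ) {Φ : (ℤ × ℤ → ℝ) → ℝ} (hΦ : Measurable Φ) :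
    ∫ e, Φ (fun v => E.wbk (τ v) e) ∂P = ∫ e, Φ (fun v => E.wbk v e) ∂P := by
  have := E.prob_bk
  have hlaw : ∀ {τ : ℤ × ℤ → ℤ × ℤ}, Function.Injective τ →
      P.map (fun e v => E.wbk (τ v) e) = Measure.infinitePi fun _ => E.μbk := by
    intro τ hτ
    rw [(E.iIndepFun_wbk.precomp hτ).map_fun_eq_infinitePi_map fun v => E.meas_wbk (τ v)]
    simp only [E.law_wbk]
  rw [← integral_map (measurable_pi_lambda _ fun v => E.meas_wbk (τ v)).aemeasurable
      hΦ.aestronglyMeasurable, hlaw hτ, ← hlaw Function.injective_id]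
  exact integral_map (measurable_pi_lambda _ fun v => E.meas_wbk v).aemeasurable
    hΦ.aestronglyMeasurable

end EnvData

noncomputable def meanGbkF (E : EnvData Ω P) (zt : Bool) (x₁ t₁ x₂ t₂ : ℤ) : ℝ :=
  ∫ e, GbkF E zt x₁ t₁ x₂ t₂ e ∂P

section Means

variable (E : EnvData Ω P) (zt : Bool) {x₁ t₁ x₂ t₂ : ℤ}

lemma GbkF_eq_Gfull (e : Ω) :
    GbkF E zt x₁ t₁ x₂ t₂ e = Gfull zt (fun v => E.wbk v e) x₁ t₁ x₂ t₂ := rfl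

lemma integrable_energy_wbk (π : HSPath x₁ t₁ x₂ t₂) :
    Integrable (fun e => energy (fun v => E.wbk v e) π) P :=
  integrable_finsetSum _ fun _ _ => E.integrable_wbk _

lemma integral_energy_wbk_nonneg (π : HSPath x₁ t₁ x₂ t₂) :
    0 ≤ ∫ e, energy (fun v => E.wbk v e) π ∂P := by
  simp only [energy]
  rw [integral_finsetSum _ fun _ _ => E.integrable_wbk _]
  exact Finset.sum_nonneg fun _ _ => (E.integral_wbk _).symm ▸ E.integral_μbk_nonneg

variable [IsProbabilityMeasure P]

lemma integrable_Gbk : Integrable (Gbk E zt x₁ t₁ x₂ t₂) P :=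
  integrable_maxOrLogSumExp zt (integrable_energy_wbk E)

lemma integrable_GbkF : Integrable (GbkF E zt x₁ t₁ x₂ t₂) P :=
  integrable_maxOrLogSumExp zt fun _ => integrable_finsetSum _ fun _ _ => E.integrable_wbk _

lemma meanGbk_nonneg [Nonempty (HSPath x₁ t₁ x₂ t₂)] : 0 ≤ meanGbk E zt x₁ t₁ x₂ t₂ :=
  (integral_energy_wbk_nonneg E (Classical.arbitrary _)).trans <|
    integral_mono (integrable_energy_wbk E _) (integrable_Gbk E zt) fun _ => energy_le_Ghalf ..

lemma meanGbk_concat {x y z a b c : ℤ} (hab : a ≤ b) (hbc : b ≤ c)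
    [Nonempty (HSPath x a y b)] [Nonempty (HSPath y b z c)] :
    meanGbk E zt x a y b + meanGbk E zt y b z c - ∫ x, x ∂E.μbk ≤ meanGbk E zt x a z c := by
  have hG := integrable_Gbk E zt (x₁ := x) (t₁ := a) (x₂ := y) (t₂ := b)
  have hG' := integrable_Gbk E zt (x₁ := y) (t₁ := b) (x₂ := z) (t₂ := c)
  have h := integral_mono ((hG.add hG').sub (E.integrable_wbk (y, b))) (integrable_Gbk E zt)
    fun e => Ghalf_concat zt (fun v => E.wbk v e) hab hbc
  rwa [integral_sub' (hG.add hG') (E.integrable_wbk _), integral_add' hG hG', E.integral_wbk] at h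

lemma meanGbk_le_meanGbkF [Nonempty (HSPath x₁ t₁ x₂ t₂)] :
    meanGbk E zt x₁ t₁ x₂ t₂ ≤ meanGbkF E zt x₁ t₁ x₂ t₂ :=
  integral_mono (integrable_Gbk E zt) (integrable_GbkF E zt) fun _ => Ghalf_le_Gfull ..

lemma meanGbkF_translate (p q : ℤ) :
    meanGbkF E zt (x₁ + p) (t₁ + q) (x₂ + p) (t₂ + q) = meanGbkF E zt x₁ t₁ x₂ t₂ := by
  have hτ : Function.Injective fun v : ℤ × ℤ => (v.1 + p, v.2 + q) := fun v w h => by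
    simpa [Prod.ext_iff] using h
  simp only [meanGbkF, GbkF_eq_Gfull, Gfull_translate]
  exact E.integral_comp_wbk_of_injective hτ (measurable_Gfull zt)

lemma meanGbk_vertical_block {k : ℤ} (hk : 0 ≤ k) (a : ℤ) :
    meanGbk E zt k a k (a + 2 * k) = meanGbkF E zt 0 0 0 (2 * k) := by
  have h := meanGbkF_translate E zt (x₁ := 0) (t₁ := 0) (x₂ := 0) (t₂ := 2 * k) k a
  rw [zero_add, zero_add, add_comm (2 * k)] at h
  rw [← h, meanGbk, meanGbkF]
  congr 1
  funext e
  exact Ghalf_eq_Gfull_of_le_add zt _ hk hk (by omega)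

lemma meanGbk_diag_chain {k : ℤ} (hk : 0 ≤ k) (n : ℕ) :
    n * (meanGbkF E zt 0 0 0 (2 * k) - ∫ x, x ∂E.μbk) ≤ meanGbk E zt 0 0 k (k + 2 * k * n) := by
  induction n with
  | zero =>
    have := HSPath.nonempty_diag hk 0
    simpa using meanGbk_nonneg E zt (x₁ := 0) (t₁ := 0) (x₂ := k) (t₂ := k + 2 * k * (0 : ℕ))
  | succ n ih =>
    have hkn : 0 ≤ 2 * k * n := by positivity
    have := HSPath.nonempty_diag hk n
    have := HSPath.nonempty_of (x₁ := k) (t₁ := k + 2 * k * n) (x₂ := k)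
      (t₂ := k + 2 * k * n + 2 * k) hk hk (by simp; omega) ⟨k, by ring⟩
    have h := meanGbk_concat E zt (x := 0) (y := k) (z := k) (a := 0) (b := k + 2 * k * n)
      (c := k + 2 * k * n + 2 * k) (by linarith) (by linarith)
    rw [meanGbk_vertical_block E zt hk] at h
    push_cast
    rw [show k + 2 * k * (n + 1) = k + 2 * k * n + 2 * k by ring]
    linarith

lemma meanGbk_vertical_lower_bound {k : ℤ} (hk : 0 ≤ k) (n : ℕ) :
    n * (meanGbkF E zt 0 0 0 (2 * k) - ∫ x, x ∂E.μbk) - ∫ x, x ∂E.μbk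
      ≤ meanGbk E zt 0 0 0 (2 * k * (n + 1)) := by
  have hkn : 0 ≤ 2 * k * n := by positivity
  have := HSPath.nonempty_diag hk n
  have := HSPath.nonempty_of (x₁ := k) (t₁ := k + 2 * k * n) (x₂ := 0)
    (t₂ := k + 2 * k * n + k) hk le_rfl (by simp [abs_of_nonneg hk]) ⟨0, by ring⟩
  have h := meanGbk_concat E zt (x := 0) (y := k) (z := 0) (a := 0) (b := k + 2 * k * n)
    (c := k + 2 * k * n + k) (by linarith) (by linarith)
  rw [show 2 * k * (n + 1) = k + 2 * k * n + k by ring]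
  linarith [meanGbk_diag_chain E zt hk n, meanGbk_nonneg E zt (x₁ := k) (t₁ := k + 2 * k * n)
    (x₂ := 0) (t₂ := k + 2 * k * n + k)]

end Means

/-- **In an i.i.d. environment, the half-space vertical LLN constant coincides with the
full-space one**: `g^bk_f(e) = g^bk(e)` for `e = (0,1)`. -/
theorem vertical_lln_full_eq_half
    {Ω : Type*} [MeasurableSpace Ω] (P : Measure Ω) [IsProbabilityMeasure P]
    (E : EnvData Ω P) (zt : Bool) (g1 g2 : ℝ)
    (h1 : Tendsto (fun n : ℕ =>
        (∫ e, Gbk E zt 0 0 0 (2 * ((n : ℤ) / 2)) e ∂P) / (n : ℝ)) atTop (nhds g1))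
    (h2 : Tendsto (fun n : ℕ =>
        (∫ e, GbkF E zt 0 0 0 (2 * ((n : ℤ) / 2)) e ∂P) / (n : ℝ)) atTop (nhds g2)) :
    g2 = g1 := by
  have ha := tendsto_div_of_tendsto_div_half (A := fun m => meanGbk E zt 0 0 0 (2 * m)) h1
  have hb := tendsto_div_of_tendsto_div_half (A := fun m => meanGbkF E zt 0 0 0 (2 * m)) h2
  have hab (n : ℕ) : meanGbk E zt 0 0 0 (2 * n) ≤ meanGbkF E zt 0 0 0 (2 * n) := by
    have := HSPath.nonempty_of (x₁ := 0) (t₁ := 0) (x₂ := 0) (t₂ := 2 * n) le_rfl le_rfl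
      (by simp) ⟨n, by ring⟩
    exact meanGbk_le_meanGbkF E zt
  have hblock (k M : ℕ) := meanGbk_vertical_lower_bound E zt (Int.natCast_nonneg k) M
  have := eq_of_le_of_block_bound ha hb hab fun k M => by
    simpa only [Nat.cast_mul, Nat.cast_add, Nat.cast_one, mul_assoc] using hblock k M
  linarith

end HalfSpacePolymer
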